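/- arXiv:1004.3461 — 5 statements merged into one kernel-verified Lean document; each statement's English description precedes it below -/
import Mathlib

section
/- Let (Δ,u) be a labeled polytope in ℝⁿ and b ∈ C*₊(Δ). Define Ψ_b(μ) = (1,μ)/b(μ) ∈ ℝ^{1+n} on the open set U = {μ ∈ ℝⁿ : b(μ) > 0}. Then Ψ_b is injective on U, the Fréchet derivative of Ψ_b at every point of U is an injective linear map ℝⁿ → ℝ^{1+n}, and {y ∈ C(Δ) : ⟨y,b⟩ = 1} = Ψ_b(Δ). -/
open scoped RealInnerProductSpace
open MeasureTheory

noncomputable section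

/-- A labeled polytope datum in `ℝⁿ`: `d` inward normals `u l` together with
constants `lam l`, giving defining affine functions `L l x = ⟪u l, x⟫ + lam l`. -/
structure LabeledPolytope (n d : ℕ) where
  u : Fin d → EuclideanSpace ℝ (Fin n)
  lam : Fin d → ℝ

namespace LabeledPolytope

variable {n d : ℕ}

/-- The defining affine functions `L_l`. -/
def L (P : LabeledPolytope n d) (l : Fin d) (x : EuclideanSpace ℝ (Fin n)) : ℝ :=
  ⟪P.u l, x⟫ + P.lam l

/-- The polytope `Δ = {x | L_l x ≥ 0 ∀ l}`. -/
def Delta (P : LabeledPolytope n d) : Set (EuclideanSpace ℝ (Fin n)) :=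
  {x | ∀ l, 0 ≤ P.L l x}

/-- The facet `F_l = Δ ∩ {L_l = 0}`. -/
def Facet (P : LabeledPolytope n d) (l : Fin d) : Set (EuclideanSpace ℝ (Fin n)) :=
  {x | x ∈ P.Delta ∧ P.L l x = 0}

/-- `(Δ,u)` is a labeled polytope: `n ≥ 1`, `Δ` is a compact polytope with nonempty
interior, and each `F_l` is a nonempty facet of dimension `n - 1`. -/
structure IsLabeledPolytope (P : LabeledPolytope n d) : Prop where
  npos : 1 ≤ n
  compact : IsCompact P.Delta
  int_nonempty : (interior P.Delta).Nonempty
  facet_nonempty : ∀ l, (P.Facet l).Nonempty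
  facet_dim : ∀ l, Module.finrank ℝ (affineSpan ℝ (P.Facet l)).direction = n - 1

/-- The value of the affine function `b = (b₀, b′)` at `x`. -/
def bval (b : ℝ × EuclideanSpace ℝ (Fin n)) (x : EuclideanSpace ℝ (Fin n)) : ℝ :=
  b.1 + ⟪b.2, x⟫

/-- The pairing `⟨(y₀,y),(b₀,b′)⟩ = b₀ y₀ + ⟨b′, y⟩`. -/
def pairing (y b : ℝ × EuclideanSpace ℝ (Fin n)) : ℝ :=
  b.1 * y.1 + ⟪b.2, y.2⟫

/-- The cone `C(Δ) = {(y₀,y) | λ_l y₀ + ⟨u_l, y⟩ ≥ 0 ∀ l} ⊆ ℝ^{1+n}`. -/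
def Cone (P : LabeledPolytope n d) : Set (ℝ × EuclideanSpace ℝ (Fin n)) :=
  {y | ∀ l, 0 ≤ P.lam l * y.1 + ⟪P.u l, y.2⟫}

/-- The dual cone `C*(Δ)`. -/
def Cstar (P : LabeledPolytope n d) : Set (ℝ × EuclideanSpace ℝ (Fin n)) :=
  {b | ∀ y ∈ P.Cone, 0 ≤ pairing y b}

/-- `C*₊(Δ)`: affine functions strictly positive on `Δ`. -/
def CstarPlus (P : LabeledPolytope n d) : Set (ℝ × EuclideanSpace ℝ (Fin n)) :=
  {b | ∀ μ ∈ P.Delta, 0 < bval b μ}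

/-- The map `Ψ_b(μ) = (1,μ)/b(μ)`. -/
def Psi (b : ℝ × EuclideanSpace ℝ (Fin n)) (x : EuclideanSpace ℝ (Fin n)) :
    ℝ × EuclideanSpace ℝ (Fin n) :=
  (bval b x)⁻¹ • ((1 : ℝ), x)

/-- The boundary measure `σ_l`: `‖u_l‖⁻¹` times the `(n-1)`-dimensional Hausdorff
measure restricted to the facet `F_l`. -/
def facetMeasure (P : LabeledPolytope n d) (l : Fin d) :
    Measure (EuclideanSpace ℝ (Fin n)) :=
  (ENNReal.ofReal ‖P.u l‖⁻¹) • (μH[(n : ℝ) - 1]).restrict (P.Facet l)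

/-- `W₀₀(b) = ∫_Δ b(μ)^{-(n+1)} dμ`. -/
def W00 (P : LabeledPolytope n d) (b : ℝ × EuclideanSpace ℝ (Fin n)) : ℝ :=
  ∫ μ in P.Delta, (bval b μ ^ (n + 1))⁻¹

/-- `W_{i0}(b) = ∫_Δ μ_i b(μ)^{-(n+2)} dμ`. -/
def Wi0 (P : LabeledPolytope n d) (i : Fin n) (b : ℝ × EuclideanSpace ℝ (Fin n)) : ℝ :=
  ∫ μ in P.Delta, μ i * (bval b μ ^ (n + 2))⁻¹

/-- `Z₀(b) = 2 Σ_l ∫_{F_l} b(μ)^{-n} dσ_l`. -/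
def Z0 (P : LabeledPolytope n d) (b : ℝ × EuclideanSpace ℝ (Fin n)) : ℝ :=
  2 * ∑ l, ∫ μ, (bval b μ ^ n)⁻¹ ∂(P.facetMeasure l)

/-- `Z_i(b) = 2 Σ_l ∫_{F_l} μ_i b(μ)^{-(n+1)} dσ_l`. -/
def Zi (P : LabeledPolytope n d) (i : Fin n) (b : ℝ × EuclideanSpace ℝ (Fin n)) : ℝ :=
  2 * ∑ l, ∫ μ, μ i * (bval b μ ^ (n + 1))⁻¹ ∂(P.facetMeasure l)

/-- `Ω = {b ∈ C*₊(Δ) : b₀ = 1}`, viewed as an open subset of `ℝⁿ` via `b ↔ b′`. -/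
def Omega (P : LabeledPolytope n d) : Set (EuclideanSpace ℝ (Fin n)) :=
  {b' | ((1 : ℝ), b') ∈ P.CstarPlus}

/-- The functional `F(b) = Z₀(b)^{n+1} / W₀₀(b)ⁿ` as a function of `b′` (with `b₀ = 1`). -/
def Fcal (P : LabeledPolytope n d) (b' : EuclideanSpace ℝ (Fin n)) : ℝ :=
  P.Z0 (1, b') ^ (n + 1) / P.W00 (1, b') ^ n

end LabeledPolytope

/-!
The first coordinate of `Ψ_b(μ)` is `b(μ)⁻¹`, which determines `b(μ)` and then `μ`; the same
two-step computation shows that the derivative of `Ψ_b` has trivial kernel.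

For the slice, let `y = (y₀, y′) ∈ C(Δ)` with `⟨y, b⟩ = 1` and pick `x₀ ∈ Δ`. If `y₀ ≤ 0`, then
`y′ - y₀ x₀` lies in the recession cone `{z | ⟨u_l, z⟩ ≥ 0 ∀ l}` of `Δ`, which is trivial because
`Δ` is bounded; so `y′ = y₀ x₀` and `⟨y, b⟩ = y₀ b(x₀) ≤ 0`, a contradiction. Hence `y₀ > 0` and
`y = y₀ (1, y′/y₀)` with `y′/y₀ ∈ Δ` and `y₀ = b(y′/y₀)⁻¹`.
-/

theorem eq_zero_of_forall_add_smul_mem_of_isBounded {E : Type*} [NormedAddCommGroup E]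
    [NormedSpace ℝ E] {S : Set E} (hS : Bornology.IsBounded S) {x z : E}
    (hray : ∀ t : ℝ, 0 ≤ t → x + t • z ∈ S) : z = 0 := by
  obtain ⟨C, hC⟩ := isBounded_iff_forall_norm_le.mp hS
  have hle : ∀ t : ℝ, 0 ≤ t → t * ‖z‖ ≤ C + ‖x‖ := fun t ht => by
    calc t * ‖z‖ = ‖(x + t • z) - x‖ := by
          rw [add_sub_cancel_left, norm_smul, Real.norm_of_nonneg ht]
      _ ≤ ‖x + t • z‖ + ‖x‖ := norm_sub_le _ _
      _ ≤ C + ‖x‖ := by gcongr; exact hC _ (hray t ht)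
  by_contra hz
  have hz_pos : 0 < ‖z‖ := norm_pos_iff.mpr hz
  obtain ⟨m, hm⟩ := exists_nat_gt ((C + ‖x‖) / ‖z‖)
  have := hle m m.cast_nonneg
  rw [div_lt_iff₀ hz_pos] at hm
  linarith

namespace LabeledPolytope

variable {n d : ℕ}

theorem Psi_eq_smul (b : ℝ × EuclideanSpace ℝ (Fin n)) (μ : EuclideanSpace ℝ (Fin n)) :
    Psi b μ = (bval b μ)⁻¹ • ((1 : ℝ), μ) := rfl

theorem Psi_fst (b : ℝ × EuclideanSpace ℝ (Fin n)) (μ : EuclideanSpace ℝ (Fin n)) :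
    (Psi b μ).1 = (bval b μ)⁻¹ := by
  simp [Psi]

theorem injOn_Psi (b : ℝ × EuclideanSpace ℝ (Fin n)) :
    Set.InjOn (Psi b) {μ | bval b μ ≠ 0} := fun x hx y _ hxy => by
  have hb : bval b x = bval b y := inv_injective (by rw [← Psi_fst, ← Psi_fst, hxy])
  have hsnd : (bval b x)⁻¹ • x = (bval b x)⁻¹ • y := by
    simpa [Psi, ← hb] using congrArg Prod.snd hxy
  exact smul_right_injective (EuclideanSpace ℝ (Fin n)) (inv_ne_zero hx) hsnd

theorem hasFDerivAt_bval (b : ℝ × EuclideanSpace ℝ (Fin n)) (μ : EuclideanSpace ℝ (Fin n)) :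
    HasFDerivAt (bval b) (innerSL ℝ b.2) μ :=
  ((innerSL ℝ b.2).hasFDerivAt).const_add b.1

def psiFDeriv (b : ℝ × EuclideanSpace ℝ (Fin n)) (μ : EuclideanSpace ℝ (Fin n)) :
    EuclideanSpace ℝ (Fin n) →L[ℝ] ℝ × EuclideanSpace ℝ (Fin n) :=
  (bval b μ)⁻¹ • (0 : EuclideanSpace ℝ (Fin n) →L[ℝ] ℝ).prod (ContinuousLinearMap.id ℝ _)
    - ((bval b μ) ^ 2)⁻¹ • (innerSL ℝ b.2).smulRight ((1 : ℝ), μ)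

theorem hasFDerivAt_Psi {b : ℝ × EuclideanSpace ℝ (Fin n)} {μ : EuclideanSpace ℝ (Fin n)}
    (hμ : bval b μ ≠ 0) : HasFDerivAt (Psi b) (psiFDeriv b μ) μ := by
  have hinv := (hasDerivAt_inv hμ).comp_hasFDerivAt μ (hasFDerivAt_bval b μ)
  have hmk := (hasFDerivAt_const (𝕜 := ℝ) (1 : ℝ) μ).prodMk (hasFDerivAt_id μ)
  refine (hinv.smul hmk).congr_fderiv ?_
  ext v
  · simp [psiFDeriv]
  · simp [psiFDeriv]
    ring

theorem psiFDeriv_injective {b : ℝ × EuclideanSpace ℝ (Fin n)} {μ : EuclideanSpace ℝ (Fin n)}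
    (hμ : bval b μ ≠ 0) : Function.Injective (psiFDeriv b μ) := by
  refine (injective_iff_map_eq_zero _).mpr fun v hv => ?_
  have hinner : ⟪b.2, v⟫ = 0 := by
    simpa [psiFDeriv, hμ] using congrArg Prod.fst hv
  simpa [psiFDeriv, hinner, hμ] using congrArg Prod.snd hv

theorem L_add_smul (P : LabeledPolytope n d) (l : Fin d) (x z : EuclideanSpace ℝ (Fin n))
    (t : ℝ) : P.L l (x + t • z) = P.L l x + t * ⟪P.u l, z⟫ := by
  simp only [L, inner_add_right, real_inner_smul_right]
  ring

theorem eq_zero_of_forall_inner_nonneg (P : LabeledPolytope n d)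
    (hbdd : Bornology.IsBounded P.Delta) (hne : P.Delta.Nonempty)
    {z : EuclideanSpace ℝ (Fin n)} (hz : ∀ l, 0 ≤ ⟪P.u l, z⟫) : z = 0 := by
  obtain ⟨x, hx⟩ := hne
  refine eq_zero_of_forall_add_smul_mem_of_isBounded hbdd (x := x) fun t ht l => ?_
  rw [L_add_smul]
  exact add_nonneg (hx l) (mul_nonneg ht (hz l))

theorem pairing_smul_one_mk (c : ℝ) (μ : EuclideanSpace ℝ (Fin n))
    (b : ℝ × EuclideanSpace ℝ (Fin n)) : pairing (c • ((1 : ℝ), μ)) b = c * bval b μ := by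
  simp only [pairing, bval, Prod.smul_mk, smul_eq_mul, real_inner_smul_right]
  ring

theorem smul_one_mk_mem_Cone_iff (P : LabeledPolytope n d) {c : ℝ} (hc : 0 < c)
    (μ : EuclideanSpace ℝ (Fin n)) : c • ((1 : ℝ), μ) ∈ P.Cone ↔ μ ∈ P.Delta := by
  have hcone : ∀ l, P.lam l * (c • ((1 : ℝ), μ)).1 + ⟪P.u l, (c • ((1 : ℝ), μ)).2⟫
      = c * P.L l μ := fun l => by
    simp only [L, Prod.smul_mk, smul_eq_mul, real_inner_smul_right]
    ring
  simp only [Cone, Delta, Set.mem_ofPred_eq, hcone, mul_nonneg_iff_of_pos_left hc]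

theorem eq_smul_one_mk {y : ℝ × EuclideanSpace ℝ (Fin n)} (hy : y.1 ≠ 0) :
    y = y.1 • ((1 : ℝ), y.1⁻¹ • y.2) := by
  ext
  · simp
  · simp [smul_smul, mul_inv_cancel₀ hy]

theorem fst_pos_of_mem_Cone (P : LabeledPolytope n d) (hbdd : Bornology.IsBounded P.Delta)
    (hne : P.Delta.Nonempty) {b : ℝ × EuclideanSpace ℝ (Fin n)} (hb : b ∈ P.CstarPlus)
    {y : ℝ × EuclideanSpace ℝ (Fin n)} (hy : y ∈ P.Cone) (hyb : pairing y b = 1) :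
    0 < y.1 := by
  obtain ⟨x, hx⟩ := hne
  by_contra! hy₀
  have hrec : ∀ l, 0 ≤ ⟪P.u l, y.2 - y.1 • x⟫ := fun l => by
    have hL : ⟪P.u l, y.2 - y.1 • x⟫
        = (P.lam l * y.1 + ⟪P.u l, y.2⟫) + (-y.1) * P.L l x := by
      simp only [L, inner_sub_right, real_inner_smul_right]
      ring
    rw [hL]
    exact add_nonneg (hy l) (mul_nonneg (neg_nonneg.mpr hy₀) (hx l))
  have hy₂ : y.2 = y.1 • x := sub_eq_zero.mp (P.eq_zero_of_forall_inner_nonneg hbdd ⟨x, hx⟩ hrec)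
  have hyb' : pairing y b = y.1 * bval b x := by
    simp only [pairing, bval, hy₂, real_inner_smul_right]
    ring
  have := mul_nonpos_of_nonpos_of_nonneg hy₀ (hb x hx).le
  linarith

theorem setOf_mem_Cone_pairing_eq_one (P : LabeledPolytope n d)
    (hbdd : Bornology.IsBounded P.Delta) (hne : P.Delta.Nonempty)
    {b : ℝ × EuclideanSpace ℝ (Fin n)} (hb : b ∈ P.CstarPlus) :
    {y | y ∈ P.Cone ∧ pairing y b = 1} = Psi b '' P.Delta := by
  ext y
  constructor
  · rintro ⟨hy, hyb⟩
    have hy₀ := P.fst_pos_of_mem_Cone hbdd hne hb hy hyb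
    have hy_eq := eq_smul_one_mk hy₀.ne'
    refine ⟨y.1⁻¹ • y.2, (P.smul_one_mk_mem_Cone_iff hy₀ _).mp (hy_eq ▸ hy), ?_⟩
    rw [hy_eq, pairing_smul_one_mk] at hyb
    rw [Psi_eq_smul, ← eq_inv_of_mul_eq_one_left hyb, ← hy_eq]
  · rintro ⟨μ, hμ, rfl⟩
    have hbμ := hb μ hμ
    refine ⟨(P.smul_one_mk_mem_Cone_iff (inv_pos.mpr hbμ) μ).mpr hμ, ?_⟩
    rw [Psi_eq_smul, pairing_smul_one_mk, inv_mul_cancel₀ hbμ.ne']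

end LabeledPolytope

open LabeledPolytope in
/-- For `b ∈ C*₊(Δ)`, the map `Ψ_b(μ) = (1,μ)/b(μ)` is injective on
`U = {μ : b(μ) > 0}`, its Fréchet derivative at every point of `U` is an injective
linear map `ℝⁿ → ℝ^{1+n}`, and `{y ∈ C(Δ) : ⟨y,b⟩ = 1} = Ψ_b(Δ)`. -/
theorem stmt2 {n d : ℕ} (P : LabeledPolytope n d) (hP : P.IsLabeledPolytope)
    (b : ℝ × EuclideanSpace ℝ (Fin n)) (hb : b ∈ P.CstarPlus) :
    Set.InjOn (Psi b) {μ | 0 < bval b μ} ∧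
      (∀ μ ∈ {μ : EuclideanSpace ℝ (Fin n) | 0 < bval b μ},
        ∃ D : EuclideanSpace ℝ (Fin n) →L[ℝ] ℝ × EuclideanSpace ℝ (Fin n),
          HasFDerivAt (Psi b) D μ ∧ Function.Injective D) ∧
      {y | y ∈ P.Cone ∧ pairing y b = 1} = Psi b '' P.Delta := by
  refine ⟨(injOn_Psi b).mono fun μ hμ => ne_of_gt hμ, fun μ hμ => ?_,
    P.setOf_mem_Cone_pairing_eq_one hP.compact.isBounded (hP.int_nonempty.mono interior_subset) hb⟩
  exact ⟨psiFDeriv b μ, hasFDerivAt_Psi (ne_of_gt hμ), psiFDeriv_injective (ne_of_gt hμ)⟩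
end
end

section
/- Let (Δ,u) be a labeled polytope in ℝⁿ. The function F(b) = Z₀(b)^{n+1}/W₀₀(b)ⁿ, regarded as a differentiable function of b′ on the open set Ω = {b ∈ C*₊(Δ) : b₀ = 1} ⊂ ℝⁿ, has vanishing differential at b ∈ Ω if and only if W_{i0}(b)·Z₀(b) = W₀₀(b)·Z_i(b) for every i = 1,…,n. -/
open scoped RealInnerProductSpace
open MeasureTheory

noncomputable section

/-!
Differentiate `W₀₀` and `Z₀` under the integral sign: for `b₀ = 1` the derivative of `b(μ)^{-k}`
in the direction `eᵢ` is `-k μᵢ b(μ)^{-(k+1)}`, so `∂ᵢW₀₀ = -(n+1) W_{i0}` and `∂ᵢZ₀ = -n Zᵢ`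
(the facet measures are finite: a compact subset of an `(n-1)`-dimensional affine subspace has
finite `(n-1)`-dimensional Hausdorff measure). Hence
`∂ᵢF = n(n+1) Z₀ⁿ W₀₀^{-(n+1)} (W_{i0} Z₀ - W₀₀ Zᵢ)` with `W₀₀ > 0` since `Δ` has interior, and
if `Z₀ = 0` every facet measure vanishes, hence so does every `Zᵢ`.
-/

open Filter Topology

theorem IsCompact.hausdorffMeasure_finrank_direction_lt_top {E : Type*} [NormedAddCommGroup E]
    [NormedSpace ℝ E] [FiniteDimensional ℝ E] [MeasurableSpace E] [BorelSpace E] {s : Set E}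
    (hs : IsCompact s) : μH[Module.finrank ℝ (affineSpan ℝ s).direction] s < ⊤ := by
  rcases s.eq_empty_or_nonempty with rfl | ⟨p, hp⟩
  · simp
  let f : (affineSpan ℝ s).direction → E := fun v => (v : E) + p
  have hf : Isometry f := (IsometryEquiv.addRight p).isometry.comp isometry_subtype_coe
  have hrange : s ⊆ Set.range f := fun x hx =>
    ⟨⟨x - p, AffineSubspace.vsub_mem_direction (subset_affineSpan ℝ s hx)
      (subset_affineSpan ℝ s hp)⟩, sub_add_cancel x p⟩
  calc μH[Module.finrank ℝ (affineSpan ℝ s).direction] s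
      = μH[Module.finrank ℝ (affineSpan ℝ s).direction] (f ⁻¹' s) := by
        rw [hf.hausdorffMeasure_preimage (Or.inl (Nat.cast_nonneg _)),
          Set.inter_eq_left.mpr hrange]
    _ < ⊤ := (hf.isClosedEmbedding.isCompact_preimage hs).measure_lt_top

theorem integral_pos_iff_ne_zero_of_ae_pos {α : Type*} [MeasurableSpace α] {μ : Measure α}
    {f : α → ℝ} (hfi : Integrable f μ) (hf : ∀ᵐ x ∂μ, 0 < f x) : 0 < ∫ x, f x ∂μ ↔ μ ≠ 0 := by
  have hsupp : μ (Function.support f) = μ Set.univ :=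
    measure_congr <| ae_eq_univ.2 <| ae_iff.1 <| hf.mono fun _ hx => hx.ne'
  rw [integral_pos_iff_support_of_nonneg_ae (hf.mono fun _ hx => hx.le) hfi, pos_iff_ne_zero,
    hsupp, Ne, Measure.measure_univ_eq_zero]

theorem EuclideanSpace.continuousLinearMap_eq_zero_iff {ι F : Type*} [Fintype ι] [DecidableEq ι]
    [NormedAddCommGroup F] [NormedSpace ℝ F] (L : EuclideanSpace ℝ ι →L[ℝ] F) :
    L = 0 ↔ ∀ i, L (EuclideanSpace.single i 1) = 0 := by
  refine ⟨fun h i => by rw [h, zero_apply], fun h => ?_⟩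
  refine ContinuousLinearMap.coe_injective <| (EuclideanSpace.basisFun ι ℝ).toBasis.ext fun i => ?_
  simpa using h i

theorem hasDerivAt_inv_pow (k : ℕ) {t : ℝ} (ht : t ≠ 0) :
    HasDerivAt (fun t : ℝ => (t ^ k)⁻¹) (-k * (t ^ (k + 1))⁻¹) t := by
  have h := hasDerivAt_zpow (-(k : ℤ)) t (Or.inl ht)
  rw [show -(k : ℤ) - 1 = -((k + 1 : ℕ) : ℤ) by push_cast; ring] at h
  simpa only [zpow_neg, zpow_natCast, Int.cast_neg, Int.cast_natCast] using h

theorem HasFDerivAt.pow_succ_div_pow {E : Type*} [NormedAddCommGroup E] [NormedSpace ℝ E]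
    {f g : E → ℝ} {f' g' : E →L[ℝ] ℝ} {x : E} (m : ℕ) (hf : HasFDerivAt f f' x)
    (hg : HasFDerivAt g g' x) (hgx : g x ≠ 0) :
    HasFDerivAt (fun y => f y ^ (m + 1) / g y ^ m)
      ((f x ^ m / g x ^ (m + 1)) • (((m + 1) * g x) • f' - (m * f x) • g')) x := by
  have hnum := (hasDerivAt_pow (m + 1) (f x)).comp_hasFDerivAt x hf
  have hden := HasDerivAt.comp_hasFDerivAt (h₂ := fun t : ℝ => (t ^ m)⁻¹) x
    (hasDerivAt_inv_pow m hgx) hg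
  refine ((hnum.mul hden).congr_fderiv ?_).congr_of_eventuallyEq (.of_forall fun y => ?_)
  · ext v
    simp only [Function.comp_apply, neg_mul, neg_smul, smul_neg, Nat.cast_add, Nat.cast_one,
      add_tsub_cancel_right, add_apply, neg_apply, smul_apply, smul_eq_mul, sub_apply]
    field_simp
    ring
  · simp [div_eq_mul_inv]

section ParametricIntegral

variable {E : Type*} [NormedAddCommGroup E] [InnerProductSpace ℝ E] {b : E}

theorem hasFDerivAt_inv_pow_one_add_inner (k : ℕ) (x : E) (hb : 0 < 1 + ⟪b, x⟫) :
    HasFDerivAt (fun c : E => ((1 + ⟪c, x⟫) ^ k)⁻¹)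
      ((-k * ((1 + ⟪b, x⟫) ^ (k + 1))⁻¹) • innerSL ℝ x) b := by
  have hinner : HasFDerivAt (fun c : E => 1 + ⟪c, x⟫) (innerSL ℝ x) b := by
    simpa only [innerSL_apply_apply, real_inner_comm x] using
      ((innerSL ℝ x).hasFDerivAt (x := b)).const_add 1
  exact HasDerivAt.comp_hasFDerivAt (h₂ := fun t : ℝ => (t ^ k)⁻¹) b
    (hasDerivAt_inv_pow k hb.ne') hinner

theorem IsCompact.exists_pos_eventually_le_one_add_inner {S : Set E} (hS : IsCompact S)
    (hb : ∀ x ∈ S, 0 < 1 + ⟪b, x⟫) : ∃ ε > 0, ∀ᶠ c in 𝓝 b, ∀ x ∈ S, ε ≤ 1 + ⟪c, x⟫ := by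
  obtain ⟨ε, hε, hεS⟩ := hS.exists_forall_le' (by fun_prop) hb
  refine ⟨ε / 2, by positivity, ?_⟩
  refine (hS.eventually_forall_of_forall_eventually (P := fun c x => ε / 2 < 1 + ⟪c, x⟫)
    fun x hx => ?_).mono fun c hc x hx => (hc x hx).le
  exact continuousAt_const.eventually_lt (f := fun _ : E × E => ε / 2) (by fun_prop)
    (by linarith [hεS x hx])

variable [MeasurableSpace E] [BorelSpace E]

theorem measurable_inv_pow_one_add_inner (k : ℕ) (c : E) :
    Measurable fun x : E => ((1 + ⟪c, x⟫) ^ k)⁻¹ := by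
  fun_prop

variable {ν : Measure E} [IsFiniteMeasure ν] {S : Set E}

theorem integrable_inv_pow_one_add_inner (k : ℕ) (hS : IsCompact S) (hmem : ∀ᵐ x ∂ν, x ∈ S)
    (hb : ∀ x ∈ S, 0 < 1 + ⟪b, x⟫) : Integrable (fun x => ((1 + ⟪b, x⟫) ^ k)⁻¹) ν := by
  obtain ⟨ε, hε, hεS⟩ := hS.exists_forall_le' (by fun_prop) hb
  refine .of_bound (measurable_inv_pow_one_add_inner k b).aestronglyMeasurable (ε ^ k)⁻¹ ?_
  filter_upwards [hmem] with x hx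
  have hx' := hεS x hx
  rw [Real.norm_of_nonneg (inv_nonneg.2 (pow_nonneg (hε.le.trans hx') _))]
  gcongr

theorem hasFDerivAt_integral_inv_pow_one_add_inner [FiniteDimensional ℝ E] (k : ℕ)
    (hS : IsCompact S) (hmem : ∀ᵐ x ∂ν, x ∈ S) (hb : ∀ x ∈ S, 0 < 1 + ⟪b, x⟫) :
    ∃ L : E →L[ℝ] ℝ, HasFDerivAt (fun c => ∫ x, ((1 + ⟪c, x⟫) ^ k)⁻¹ ∂ν) L b ∧
      ∀ v, L v = -k * ∫ x, ⟪x, v⟫ * ((1 + ⟪b, x⟫) ^ (k + 1))⁻¹ ∂ν := by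
  obtain ⟨ε, hε, hnear⟩ := hS.exists_pos_eventually_le_one_add_inner hb
  obtain ⟨R, hR⟩ := hS.isBounded.exists_norm_le
  let F' : E → E → E →L[ℝ] ℝ := fun c x => (-k * ((1 + ⟪c, x⟫) ^ (k + 1))⁻¹) • innerSL ℝ x
  have hF'_bound : ∀ᵐ x ∂ν, ∀ c ∈ {c | ∀ x ∈ S, ε ≤ 1 + ⟪c, x⟫},
      ‖F' c x‖ ≤ k * (ε ^ (k + 1))⁻¹ * R := by
    filter_upwards [hmem] with x hx c hc
    have hcx := hc x hx
    rw [norm_smul, innerSL_apply_norm, norm_mul, norm_neg, Real.norm_natCast,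
      Real.norm_of_nonneg (inv_nonneg.2 (pow_nonneg (hε.le.trans hcx) _))]
    gcongr
    exact hR x hx
  have hF'_meas : AEStronglyMeasurable (F' b) ν :=
    (measurable_const.mul (measurable_inv_pow_one_add_inner (k + 1) b)).aestronglyMeasurable.smul
      (innerSL ℝ).continuous.aestronglyMeasurable
  have hF'_int : Integrable (F' b) ν :=
    .of_bound hF'_meas _ (hF'_bound.mono fun x hx => hx b hnear.self_of_nhds)
  refine ⟨∫ x, F' b x ∂ν, hasFDerivAt_integral_of_dominated_of_fderiv_le hnear
    (.of_forall fun c => (measurable_inv_pow_one_add_inner k c).aestronglyMeasurable)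
    (integrable_inv_pow_one_add_inner k hS hmem hb) hF'_meas hF'_bound (integrable_const _)
    ?_, fun v => ?_⟩
  · filter_upwards [hmem] with x hx c hc
    exact hasFDerivAt_inv_pow_one_add_inner k x (hε.trans_le (hc x hx))
  · rw [ContinuousLinearMap.integral_apply hF'_int, ← integral_const_mul]
    congr 1 with x
    simp only [F', smul_apply, innerSL_apply_apply, smul_eq_mul]
    ring

end ParametricIntegral

namespace LabeledPolytope

variable {n d : ℕ} (P : LabeledPolytope n d)

theorem isClosed_Delta : IsClosed P.Delta := by
  simp only [Delta, Set.ofPred_forall]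
  exact isClosed_iInter fun l => isClosed_le continuous_const (by unfold L; fun_prop)

theorem isCompact_facet (hP : P.IsLabeledPolytope) (l : Fin d) : IsCompact (P.Facet l) :=
  hP.compact.of_isClosed_subset
    (P.isClosed_Delta.inter (isClosed_eq (by unfold L; fun_prop) continuous_const))
    fun _ hx => hx.1

theorem ae_mem_facet (hP : P.IsLabeledPolytope) (l : Fin d) :
    ∀ᵐ x ∂P.facetMeasure l, x ∈ P.Facet l :=
  Measure.ae_smul_measure (ae_restrict_mem (P.isCompact_facet hP l).measurableSet) _

theorem isFiniteMeasure_facetMeasure (hP : P.IsLabeledPolytope) (l : Fin d) :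
    IsFiniteMeasure (P.facetMeasure l) := by
  have hdim : (Module.finrank ℝ (affineSpan ℝ (P.Facet l)).direction : ℝ) = n - 1 := by
    rw [hP.facet_dim l, Nat.cast_sub hP.npos, Nat.cast_one]
  have hfin := (P.isCompact_facet hP l).hausdorffMeasure_finrank_direction_lt_top
  rw [hdim] at hfin
  constructor
  rw [facetMeasure, Measure.smul_apply, Measure.restrict_apply_univ, smul_eq_mul]
  exact ENNReal.mul_lt_top ENNReal.ofReal_lt_top hfin

theorem isFiniteMeasure_restrict_Delta (hP : P.IsLabeledPolytope) :
    IsFiniteMeasure (volume.restrict P.Delta) :=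
  isFiniteMeasure_restrict.2 hP.compact.measure_lt_top.ne

variable {P} {b' : EuclideanSpace ℝ (Fin n)}

theorem W00_pos (hP : P.IsLabeledPolytope) (hb : b' ∈ P.Omega) : 0 < P.W00 (1, b') := by
  have := P.isFiniteMeasure_restrict_Delta hP
  have hmem := ae_restrict_mem (μ := volume) P.isClosed_Delta.measurableSet
  refine (integral_pos_iff_ne_zero_of_ae_pos
    (integrable_inv_pow_one_add_inner (n + 1) hP.compact hmem hb) ?_).2 ?_
  · filter_upwards [hmem] with x hx
    exact inv_pos.2 (pow_pos (hb x hx) _)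
  · rw [Ne, Measure.restrict_eq_zero]
    exact (Measure.measure_pos_of_nonempty_interior _ hP.int_nonempty).ne'

theorem hasFDerivAt_W00 (hP : P.IsLabeledPolytope) (hb : b' ∈ P.Omega) :
    ∃ L : EuclideanSpace ℝ (Fin n) →L[ℝ] ℝ, HasFDerivAt (fun c => P.W00 (1, c)) L b' ∧
      ∀ i, L (EuclideanSpace.single i 1) = -(n + 1) * P.Wi0 i (1, b') := by
  have := P.isFiniteMeasure_restrict_Delta hP
  obtain ⟨L, hL, hLv⟩ := hasFDerivAt_integral_inv_pow_one_add_inner (n + 1) hP.compact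
    (ae_restrict_mem (μ := volume) P.isClosed_Delta.measurableSet) hb
  refine ⟨L, hL, fun i => ?_⟩
  simp only [hLv, EuclideanSpace.inner_single_right, conj_trivial, one_mul]
  push_cast
  rfl

theorem hasFDerivAt_Z0 (hP : P.IsLabeledPolytope) (hb : b' ∈ P.Omega) :
    ∃ L : EuclideanSpace ℝ (Fin n) →L[ℝ] ℝ, HasFDerivAt (fun c => P.Z0 (1, c)) L b' ∧
      ∀ i, L (EuclideanSpace.single i 1) = -n * P.Zi i (1, b') := by
  have hfacet l := by
    have := P.isFiniteMeasure_facetMeasure hP l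
    exact hasFDerivAt_integral_inv_pow_one_add_inner (b := b') n (P.isCompact_facet hP l)
      (P.ae_mem_facet hP l) fun x hx => hb x hx.1
  choose L hL hLv using hfacet
  refine ⟨(2 : ℝ) • ∑ l, L l, (HasFDerivAt.fun_sum fun l _ => hL l).const_mul 2, fun i => ?_⟩
  simp only [smul_apply, sum_apply, hLv, EuclideanSpace.inner_single_right, conj_trivial,
    one_mul, smul_eq_mul, ← Finset.mul_sum, Zi, bval]
  ring

theorem integral_facetMeasure_pos_iff (hP : P.IsLabeledPolytope) (hb : b' ∈ P.Omega) (k : ℕ)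
    (l : Fin d) : 0 < ∫ x, (bval (1, b') x ^ k)⁻¹ ∂P.facetMeasure l ↔ P.facetMeasure l ≠ 0 := by
  have := P.isFiniteMeasure_facetMeasure hP l
  refine integral_pos_iff_ne_zero_of_ae_pos (integrable_inv_pow_one_add_inner k
    (P.isCompact_facet hP l) (P.ae_mem_facet hP l) fun x hx => hb x hx.1) ?_
  filter_upwards [P.ae_mem_facet hP l] with x hx
  exact inv_pos.2 (pow_pos (hb x hx.1) k)

theorem Zi_eq_zero_of_Z0_eq_zero (hP : P.IsLabeledPolytope) (hb : b' ∈ P.Omega)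
    (hZ : P.Z0 (1, b') = 0) (i : Fin n) : P.Zi i (1, b') = 0 := by
  have hsum : ∑ l, ∫ x, (bval (1, b') x ^ n)⁻¹ ∂P.facetMeasure l = 0 := by
    simpa [Z0] using hZ
  have hnonneg l : 0 ≤ ∫ x, (bval (1, b') x ^ n)⁻¹ ∂P.facetMeasure l :=
    integral_nonneg_of_ae <| (P.ae_mem_facet hP l).mono fun x hx =>
      inv_nonneg.2 (pow_nonneg (hb x hx.1).le n)
  have hzero l : P.facetMeasure l = 0 := by
    by_contra h
    exact ((integral_facetMeasure_pos_iff hP hb n l).2 h).ne'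
      ((Finset.sum_eq_zero_iff_of_nonneg fun l _ => hnonneg l).1 hsum l (Finset.mem_univ l))
  simp [Zi, hzero]

theorem hasFDerivAt_Fcal (hP : P.IsLabeledPolytope) (hb : b' ∈ P.Omega) :
    ∃ L : EuclideanSpace ℝ (Fin n) →L[ℝ] ℝ, HasFDerivAt P.Fcal L b' ∧
      ∀ i, L (EuclideanSpace.single i 1) =
        n * (n + 1) * P.Z0 (1, b') ^ n / P.W00 (1, b') ^ (n + 1)
          * (P.Wi0 i (1, b') * P.Z0 (1, b') - P.W00 (1, b') * P.Zi i (1, b')) := by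
  obtain ⟨LZ, hZ, hLZ⟩ := hasFDerivAt_Z0 hP hb
  obtain ⟨LW, hW, hLW⟩ := hasFDerivAt_W00 hP hb
  refine ⟨_, hZ.pow_succ_div_pow n hW (W00_pos hP hb).ne', fun i => ?_⟩
  simp only [smul_apply, sub_apply, hLZ, hLW, smul_eq_mul]
  ring

end LabeledPolytope

open LabeledPolytope in
/-- The function `F(b) = Z₀(b)^{n+1}/W₀₀(b)ⁿ`, regarded as a
differentiable function of `b′` on `Ω = {b ∈ C*₊(Δ) : b₀ = 1}`, has vanishing differential
at `b ∈ Ω` if and only if `W_{i0}(b)·Z₀(b) = W₀₀(b)·Z_i(b)` for every `i`. -/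
theorem stmt6 {n d : ℕ} (P : LabeledPolytope n d) (hP : P.IsLabeledPolytope)
    (b' : EuclideanSpace ℝ (Fin n)) (hb : b' ∈ P.Omega) :
    DifferentiableAt ℝ P.Fcal b' ∧
      (fderiv ℝ P.Fcal b' = 0 ↔
        ∀ i : Fin n,
          P.Wi0 i (1, b') * P.Z0 (1, b') = P.W00 (1, b') * P.Zi i (1, b')) := by
  obtain ⟨L, hL, hLi⟩ := hasFDerivAt_Fcal hP hb
  refine ⟨hL.differentiableAt, ?_⟩
  rw [hL.fderiv, EuclideanSpace.continuousLinearMap_eq_zero_iff]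
  refine forall_congr' fun i => ?_
  have hn : (n : ℝ) ≠ 0 := Nat.cast_ne_zero.2 i.pos.ne'
  rw [hLi, mul_eq_zero, sub_eq_zero]
  by_cases hZ : P.Z0 (1, b') = 0
  · simp [hZ, Zi_eq_zero_of_Z0_eq_zero hP hb hZ, hn]
  · simp [hZ, hn, (W00_pos hP hb).ne', Nat.cast_add_one_ne_zero]
end
end

section
/- Let (Δ,u) be a labeled polytope in ℝⁿ that is monotone, i.e. there exist μ* in the interior of Δ and c > 0 with L_l(μ*) = c for every l = 1,…,d. Then: (i) all the defining functions L_l = (λ_l, u_l) lie in the affine hyperplane {b ∈ ℝ × ℝⁿ : b(μ*) = c} of Aff(ℝⁿ,ℝ); (ii) for every b ∈ C*₊(Δ), the point y* = (1,μ*)/b(μ*) belongs to Δ_b = C(Δ) ∩ {y : ⟨y,b⟩ = 1}, lies in Ψ_b(int Δ), and satisfies ⟨y*, L_l⟩ = c/b(μ*) > 0 for every l, a value independent of l; in particular every characteristic polytope Δ_b of C(Δ) is monotone. -/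
open scoped RealInnerProductSpace
open MeasureTheory

noncomputable section

namespace LabeledPolytope

variable {n d : ℕ}

theorem bval_eq_L (P : LabeledPolytope n d) (l : Fin d) (x : EuclideanSpace ℝ (Fin n)) :
    bval (P.lam l, P.u l) x = P.L l x :=
  add_comm _ _

theorem mem_Cone_iff (P : LabeledPolytope n d) (y : ℝ × EuclideanSpace ℝ (Fin n)) :
    y ∈ P.Cone ↔ ∀ l, 0 ≤ pairing y (P.lam l, P.u l) :=
  Iff.rfl

theorem pairing_Psi (a b : ℝ × EuclideanSpace ℝ (Fin n)) (x : EuclideanSpace ℝ (Fin n)) :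
    pairing (Psi b x) a = bval a x / bval b x := by
  simp only [pairing, Psi, bval, Prod.smul_fst, Prod.smul_snd, smul_eq_mul,
    real_inner_smul_right]
  ring

theorem pairing_Psi_self (b : ℝ × EuclideanSpace ℝ (Fin n)) {x : EuclideanSpace ℝ (Fin n)}
    (hb : bval b x ≠ 0) : pairing (Psi b x) b = 1 := by
  rw [pairing_Psi, div_self hb]

theorem Psi_mem_Cone (P : LabeledPolytope n d) {b : ℝ × EuclideanSpace ℝ (Fin n)}
    {x : EuclideanSpace ℝ (Fin n)} (hx : x ∈ P.Delta) (hb : 0 < bval b x) :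
    Psi b x ∈ P.Cone := by
  refine (P.mem_Cone_iff _).2 fun l => ?_
  rw [pairing_Psi, bval_eq_L]
  exact div_nonneg (hx l) hb.le

end LabeledPolytope

open LabeledPolytope in
theorem stmt10_general {n d : ℕ} (P : LabeledPolytope n d)
    (μs : EuclideanSpace ℝ (Fin n)) (c : ℝ)
    (hμs : μs ∈ interior P.Delta) (hc : 0 < c) (hmono : ∀ l, P.L l μs = c) :
    (∀ l, bval (P.lam l, P.u l) μs = c) ∧
      ∀ b ∈ P.CstarPlus,
        Psi b μs ∈ P.Cone ∧ pairing (Psi b μs) b = 1 ∧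
          Psi b μs ∈ Psi b '' interior P.Delta ∧
          (∀ l, pairing (Psi b μs) (P.lam l, P.u l) = c / bval b μs) ∧
          0 < c / bval b μs := by
  have hL : ∀ l, bval (P.lam l, P.u l) μs = c := fun l => (P.bval_eq_L l μs).trans (hmono l)
  refine ⟨hL, fun b hb => ?_⟩
  have hμΔ : μs ∈ P.Delta := interior_subset hμs
  have hbμ : 0 < bval b μs := hb μs hμΔ
  exact ⟨P.Psi_mem_Cone hμΔ hbμ, pairing_Psi_self b hbμ.ne', ⟨μs, hμs, rfl⟩,
    fun l => by rw [pairing_Psi, hL], div_pos hc hbμ⟩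

open LabeledPolytope in
/-- If `(Δ,u)` is monotone with `L_l(μ*) = c > 0` for all `l` and `μ*`
interior to `Δ`, then: (i) all the defining functions `L_l = (λ_l, u_l)` lie in the affine
hyperplane `{b : b(μ*) = c}`; (ii) for every `b ∈ C*₊(Δ)`, the point `y* = (1,μ*)/b(μ*)`
belongs to `Δ_b = C(Δ) ∩ {⟨·,b⟩ = 1}`, lies in `Ψ_b(int Δ)`, and satisfies
`⟨y*, L_l⟩ = c/b(μ*) > 0` for every `l`; in particular every characteristic polytope of
`C(Δ)` is monotone. -/
theorem stmt10 {n d : ℕ} (P : LabeledPolytope n d) (hP : P.IsLabeledPolytope)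
    (μs : EuclideanSpace ℝ (Fin n)) (c : ℝ)
    (hμs : μs ∈ interior P.Delta) (hc : 0 < c) (hmono : ∀ l, P.L l μs = c) :
    (∀ l, bval (P.lam l, P.u l) μs = c) ∧
      ∀ b ∈ P.CstarPlus,
        Psi b μs ∈ P.Cone ∧ pairing (Psi b μs) b = 1 ∧
          Psi b μs ∈ Psi b '' interior P.Delta ∧
          (∀ l, pairing (Psi b μs) (P.lam l, P.u l) = c / bval b μs) ∧
          0 < c / bval b μs :=
  stmt10_general P μs c hμs hc hmono
end
end

section
/- For every (b₁,b₂) ∈ Ω: ∫_{[−1,1]²} (1 + b₁x + b₂y)^{−3} dx dy = 4 / (b(p₁)·b(p₂)·b(p₃)·b(p₄)). -/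
open MeasureTheory

/-- Inner integral: `∫_{-1}^1 (a+cx)^{-3} dx = 2a/((a-c)²(a+c)²)` for `|c| < a`. -/
lemma inner_int (a c : ℝ) (h : |c| < a) :
    ∫ x in (-1:ℝ)..1, ((a + c * x) ^ 3)⁻¹ = 2 * a / ((a - c) ^ 2 * (a + c) ^ 2) := by
  have habs := abs_lt.mp h
  have ha : 0 < a := lt_of_le_of_lt (abs_nonneg c) h
  have hmc : 0 < a - c := by linarith
  have hpc : 0 < a + c := by linarith
  have hpos : ∀ x ∈ Set.uIcc (-1:ℝ) 1, 0 < a + c * x := by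
    intro x hx
    rw [Set.uIcc_of_le (by norm_num)] at hx
    rcases abs_cases c with ⟨e, _⟩ | ⟨e, _⟩ <;> nlinarith [hx.1, hx.2]
  have hcont : ContinuousOn (fun x : ℝ => ((a + c * x) ^ 3)⁻¹) (Set.uIcc (-1:ℝ) 1) := by
    apply ContinuousOn.inv₀
    · fun_prop
    · intro x hx
      exact pow_ne_zero _ (ne_of_gt (hpos x hx))
  have hint : IntervalIntegrable (fun x : ℝ => ((a + c * x) ^ 3)⁻¹) volume (-1) 1 :=
    hcont.intervalIntegrable
  rcases eq_or_ne c 0 with hc | hc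
  · subst hc
    simp only [zero_mul, add_zero, mul_zero, sub_zero]
    rw [intervalIntegral.integral_const, smul_eq_mul]
    have ha' : a ≠ 0 := ne_of_gt ha
    field_simp
    ring
  · have key : ∀ x ∈ Set.uIcc (-1:ℝ) 1,
        HasDerivAt (fun x : ℝ => -(((a + c * x) ^ 2)⁻¹) / (2 * c)) (((a + c * x) ^ 3)⁻¹) x := by
      intro x hx
      have h1 : HasDerivAt (fun x : ℝ => a + c * x) c x := by
        simpa using ((hasDerivAt_id x).const_mul c).const_add a
      have h2 : HasDerivAt (fun x : ℝ => (a + c * x) ^ 2) (2 * (a + c * x) * c) x := by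
        simpa using h1.fun_pow 2
      have hne0 : a + c * x ≠ 0 := ne_of_gt (hpos x hx)
      have hne : (a + c * x) ^ 2 ≠ 0 := pow_ne_zero _ hne0
      have h3 := h2.inv hne
      have h4 := (h3.neg).div_const (2 * c)
      refine h4.congr_deriv ?_
      field_simp
    rw [intervalIntegral.integral_eq_sub_of_hasDerivAt key hint]
    have h1 : a - c ≠ 0 := ne_of_gt hmc
    have h2 : a + c ≠ 0 := ne_of_gt hpc
    have hx1 : a + c * (1:ℝ) = a + c := by ring
    have hx2 : a + c * (-1:ℝ) = a - c := by ring
    rw [hx1, hx2]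
    field_simp
    ring

/-- Outer integral. -/
lemma outer_int (b₁ b₂ : ℝ) (hs : |b₁| + |b₂| < 1) :
    ∫ x in (-1:ℝ)..1,
        2 * (1 + b₁ * x) / ((1 + b₁ * x - b₂) ^ 2 * (1 + b₁ * x + b₂) ^ 2) =
      4 / ((1 - b₁ - b₂) * (1 - b₁ + b₂) * (1 + b₁ + b₂) * (1 + b₁ - b₂)) := by
  have hb1 := abs_nonneg b₁
  have hb2 := abs_nonneg b₂
  have hb1' := le_abs_self b₁
  have hb2' := le_abs_self b₂
  have hb1'' := neg_abs_le b₁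
  have hb2'' := neg_abs_le b₂
  have hposu : ∀ x ∈ Set.uIcc (-1:ℝ) 1, 0 < 1 + b₁ * x - b₂ := by
    intro x hx
    rw [Set.uIcc_of_le (by norm_num)] at hx
    rcases abs_cases b₁ with ⟨e, _⟩ | ⟨e, _⟩ <;> nlinarith [hx.1, hx.2]
  have hposv : ∀ x ∈ Set.uIcc (-1:ℝ) 1, 0 < 1 + b₁ * x + b₂ := by
    intro x hx
    rw [Set.uIcc_of_le (by norm_num)] at hx
    rcases abs_cases b₁ with ⟨e, _⟩ | ⟨e, _⟩ <;> nlinarith [hx.1, hx.2]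
  have c1 : 0 < 1 - b₁ - b₂ := by linarith
  have c2 : 0 < 1 - b₁ + b₂ := by linarith
  have c3 : 0 < 1 + b₁ + b₂ := by linarith
  have c4 : 0 < 1 + b₁ - b₂ := by linarith
  have hcont : ContinuousOn
      (fun x : ℝ => 2 * (1 + b₁ * x) / ((1 + b₁ * x - b₂) ^ 2 * (1 + b₁ * x + b₂) ^ 2))
      (Set.uIcc (-1:ℝ) 1) := by
    apply ContinuousOn.div
    · fun_prop
    · fun_prop
    · intro x hx
      exact mul_ne_zero (pow_ne_zero _ (ne_of_gt (hposu x hx)))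
        (pow_ne_zero _ (ne_of_gt (hposv x hx)))
  have hint : IntervalIntegrable
      (fun x : ℝ => 2 * (1 + b₁ * x) / ((1 + b₁ * x - b₂) ^ 2 * (1 + b₁ * x + b₂) ^ 2))
      volume (-1) 1 := hcont.intervalIntegrable
  rcases eq_or_ne b₁ 0 with hb | hb
  · subst hb
    simp only [zero_mul, add_zero, mul_zero]
    rw [intervalIntegral.integral_const, smul_eq_mul]
    have e1 : (1:ℝ) - 0 - b₂ = 1 - b₂ := by ring
    have e2 : (1:ℝ) - 0 + b₂ = 1 + b₂ := by ring
    have h1 : (1:ℝ) - b₂ ≠ 0 := by linarith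
    have h2 : (1:ℝ) + b₂ ≠ 0 := by linarith
    rw [e1, e2]
    field_simp
    ring
  · have key : ∀ x ∈ Set.uIcc (-1:ℝ) 1,
        HasDerivAt (fun x : ℝ => -(((1 + b₁ * x - b₂) * (1 + b₁ * x + b₂))⁻¹) / b₁)
          (2 * (1 + b₁ * x) / ((1 + b₁ * x - b₂) ^ 2 * (1 + b₁ * x + b₂) ^ 2)) x := by
      intro x hx
      have hu : HasDerivAt (fun x : ℝ => 1 + b₁ * x - b₂) b₁ x := by
        simpa using (((hasDerivAt_id x).const_mul b₁).const_add 1).sub_const b₂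
      have hv : HasDerivAt (fun x : ℝ => 1 + b₁ * x + b₂) b₁ x := by
        simpa using (((hasDerivAt_id x).const_mul b₁).const_add 1).add_const b₂
      have hp := hu.mul hv
      have hne : (1 + b₁ * x - b₂) * (1 + b₁ * x + b₂) ≠ 0 :=
        mul_ne_zero (ne_of_gt (hposu x hx)) (ne_of_gt (hposv x hx))
      have h3 := hp.inv hne
      have h4 := (h3.neg).div_const b₁
      refine h4.congr_deriv ?_
      have hu0 : (1 : ℝ) + b₁ * x - b₂ ≠ 0 := ne_of_gt (hposu x hx)
      have hv0 : (1 : ℝ) + b₁ * x + b₂ ≠ 0 := ne_of_gt (hposv x hx)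
      simp only [Pi.mul_apply]
      field_simp
      ring
    rw [intervalIntegral.integral_eq_sub_of_hasDerivAt key hint]
    have e1 : (1 : ℝ) + b₁ * 1 - b₂ = 1 + b₁ - b₂ := by ring
    have e2 : (1 : ℝ) + b₁ * 1 + b₂ = 1 + b₁ + b₂ := by ring
    have e3 : (1 : ℝ) + b₁ * (-1) - b₂ = 1 - b₁ - b₂ := by ring
    have e4 : (1 : ℝ) + b₁ * (-1) + b₂ = 1 - b₁ + b₂ := by ring
    rw [e1, e2, e3, e4]
    have h1 : (1 : ℝ) - b₁ - b₂ ≠ 0 := ne_of_gt c1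
    have h2 : (1 : ℝ) - b₁ + b₂ ≠ 0 := ne_of_gt c2
    have h3 : (1 : ℝ) + b₁ + b₂ ≠ 0 := ne_of_gt c3
    have h4 : (1 : ℝ) + b₁ - b₂ ≠ 0 := ne_of_gt c4
    field_simp
    ring

/-- For every `(b₁,b₂) ∈ Ω` (i.e. `|b₁+b₂| < 1` and `|b₁−b₂| < 1`, so
that `b(x,y) = 1 + b₁x + b₂y` is positive on the square `[−1,1]²`):
`∫_{[−1,1]²} (1 + b₁x + b₂y)^{−3} dx dy = 4 / (b(p₁)·b(p₂)·b(p₃)·b(p₄))`, where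
`b(p₁) = 1−b₁−b₂`, `b(p₂) = 1−b₁+b₂`, `b(p₃) = 1+b₁+b₂`, `b(p₄) = 1+b₁−b₂` are the values
of `b` at the four vertices. -/
theorem stmt12 (b₁ b₂ : ℝ) (h₁ : |b₁ + b₂| < 1) (h₂ : |b₁ - b₂| < 1) :
    ∫ p in Set.Icc (-1 : ℝ) 1 ×ˢ Set.Icc (-1 : ℝ) 1,
        ((1 + b₁ * p.1 + b₂ * p.2) ^ 3)⁻¹ =
      4 / ((1 - b₁ - b₂) * (1 - b₁ + b₂) * (1 + b₁ + b₂) * (1 + b₁ - b₂)) := by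
  have hs : |b₁| + |b₂| < 1 := by
    have a1 := abs_lt.mp h₁
    have a2 := abs_lt.mp h₂
    rcases abs_cases b₁ with ⟨e1, _⟩ | ⟨e1, _⟩ <;>
      rcases abs_cases b₂ with ⟨e2, _⟩ | ⟨e2, _⟩ <;> linarith
  have hpos : ∀ p ∈ Set.Icc (-1 : ℝ) 1 ×ˢ Set.Icc (-1 : ℝ) 1,
      0 < 1 + b₁ * p.1 + b₂ * p.2 := by
    rintro ⟨x, y⟩ ⟨hx, hy⟩
    simp only [Set.mem_Icc] at hx hy
    rcases abs_cases b₁ with ⟨e1, _⟩ | ⟨e1, _⟩ <;>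
      rcases abs_cases b₂ with ⟨e2, _⟩ | ⟨e2, _⟩ <;>
      nlinarith [hx.1, hx.2, hy.1, hy.2]
  have hcont : ContinuousOn (fun p : ℝ × ℝ => ((1 + b₁ * p.1 + b₂ * p.2) ^ 3)⁻¹)
      (Set.Icc (-1 : ℝ) 1 ×ˢ Set.Icc (-1 : ℝ) 1) := by
    apply ContinuousOn.inv₀
    · fun_prop
    · intro p hp
      exact pow_ne_zero _ (ne_of_gt (hpos p hp))
  have hintg : IntegrableOn (fun p : ℝ × ℝ => ((1 + b₁ * p.1 + b₂ * p.2) ^ 3)⁻¹)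
      (Set.Icc (-1 : ℝ) 1 ×ˢ Set.Icc (-1 : ℝ) 1) volume :=
    hcont.integrableOn_compact (isCompact_Icc.prod isCompact_Icc)
  rw [Measure.volume_eq_prod] at hintg ⊢
  rw [MeasureTheory.setIntegral_prod _ hintg]
  have step1 : ∀ x ∈ Set.Icc (-1:ℝ) 1,
      ∫ y in Set.Icc (-1:ℝ) 1, ((1 + b₁ * x + b₂ * y) ^ 3)⁻¹ =
        2 * (1 + b₁ * x) / ((1 + b₁ * x - b₂) ^ 2 * (1 + b₁ * x + b₂) ^ 2) := by
    intro x hx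
    simp only [Set.mem_Icc] at hx
    have hax : |b₂| < 1 + b₁ * x := by
      rcases abs_cases b₁ with ⟨e1, _⟩ | ⟨e1, _⟩ <;> nlinarith [hx.1, hx.2, abs_nonneg b₂]
    have := inner_int (1 + b₁ * x) b₂ hax
    rw [MeasureTheory.integral_Icc_eq_integral_Ioc,
      ← intervalIntegral.integral_of_le (by norm_num : (-1:ℝ) ≤ 1)]
    rw [this]
  rw [MeasureTheory.setIntegral_congr_fun measurableSet_Icc step1]
  rw [MeasureTheory.integral_Icc_eq_integral_Ioc,
    ← intervalIntegral.integral_of_le (by norm_num : (-1:ℝ) ≤ 1)]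
  exact outer_int b₁ b₂ hs
end

section
/- Every strictly convex polyhedral cone in ℝ³ with exactly 4 facets is linearly equivalent to C_o: if C = ∩_{i=1}^4 {x ∈ ℝ³ : ⟨x,w_i⟩ ≥ 0} is a closed convex cone with nonempty interior satisfying C ∩ (−C) = {0}, such that each F_i = C ∩ {x : ⟨x,w_i⟩ = 0} is 2-dimensional and the four F_i are pairwise distinct, then there exists a linear isomorphism A of ℝ³ with A(C_o) = C. -/
/-!
Take a nontrivial linear relation `∑ gᵢ wᵢ = 0` among the four normals. On the facet `F_k` it
reads `∑_{i ≠ k} gᵢ ⟨x, wᵢ⟩ = 0`; if all `gᵢ` with `i ≠ k` were `≤ 0`, then `F_k` would lie in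
another facet `F_i`, which is impossible because distinct facets span distinct planes. So the
relation has two positive and two negative coefficients: after reordering,
`a w₁ + c w₃ = b w₂ + d w₄` with `a, b, c, d > 0`, the same shape as `v₁ + v₃ = v₂ + v₄`.
The linear isomorphism `A` with `⟨Ax, a w₁⟩ = ⟨x, v₁⟩`, `⟨Ax, b w₂⟩ = ⟨x, v₂⟩`,
`⟨Ax, c w₃⟩ = ⟨x, v₃⟩` then also has `⟨Ax, d w₄⟩ = ⟨x, v₄⟩`, hence maps `C_o` onto `C`.
-/

noncomputable section

/-- The four normal directions `v₁ = e₁+e₃`, `v₂ = e₂+e₃`, `v₃ = e₃−e₁`, `v₄ = e₃−e₂`. -/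
def vCone : Fin 4 → Fin 3 → ℝ := ![![1, 0, 1], ![0, 1, 1], ![-1, 0, 1], ![0, -1, 1]]

/-- The standard dot product on `ℝ³`. -/
def dot3 (x y : Fin 3 → ℝ) : ℝ := ∑ i, x i * y i

/-- The cone `C_o = {x ∈ ℝ³ : ⟨x, v_i⟩ ≥ 0, i = 1,…,4}`. -/
def Co : Set (Fin 3 → ℝ) := {x | ∀ i, 0 ≤ dot3 x (vCone i)}

/-- The facet `F_i = C_o ∩ {⟨·, v_i⟩ = 0}`. -/
def CoFacet (i : Fin 4) : Set (Fin 3 → ℝ) := {x | x ∈ Co ∧ dot3 x (vCone i) = 0}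

/-- `Λ ⊆ ℝ³` is a lattice: the `ℤ`-span of an `ℝ`-basis of `ℝ³`. -/
def IsLattice (Λ : AddSubgroup (Fin 3 → ℝ)) : Prop :=
  ∃ e : Module.Basis (Fin 3) ℝ (Fin 3 → ℝ), Λ = AddSubgroup.closure (Set.range ⇑e)

/-- A nonzero `w ∈ Λ` is primitive if `w = k·w′` with `w′ ∈ Λ` and `k` a positive integer
forces `k = 1`. -/
def IsPrimitive (Λ : AddSubgroup (Fin 3 → ℝ)) (w : Fin 3 → ℝ) : Prop :=
  w ∈ Λ ∧ w ≠ 0 ∧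
    ∀ (k : ℕ) (w' : Fin 3 → ℝ), 0 < k → w' ∈ Λ → w = (k : ℝ) • w' → k = 1

/-- `(C_o,Λ)` is good: each ray `ℝ_{>0} v_i` contains a primitive vector `û_i` of `Λ`, and
for every `I ⊆ {1,2,3,4}` with `∩_{i∈I} F_i ≠ {0}`, the `ℤ`-span of `{û_i : i ∈ I}` equals
`Λ ∩ span_ℝ {û_i : i ∈ I}`. -/
def IsGoodCone (Λ : AddSubgroup (Fin 3 → ℝ)) : Prop :=
  ∃ uh : Fin 4 → Fin 3 → ℝ,
    (∀ i, IsPrimitive Λ (uh i) ∧ ∃ s : ℝ, 0 < s ∧ uh i = s • vCone i) ∧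
    ∀ I : Finset (Fin 4), (⋂ i ∈ I, CoFacet i) ≠ {0} →
      AddSubgroup.closure (uh '' ↑I) =
        Λ ⊓ (Submodule.span ℝ (uh '' ↑I)).toAddSubgroup

open Module Submodule Matrix Set

variable {n : ℕ} {ι : Type*}

def polyCone (w : ι → Fin n → ℝ) : Set (Fin n → ℝ) := {x | ∀ i, 0 ≤ x ⬝ᵥ w i}

def polyFacet (w : ι → Fin n → ℝ) (i : ι) : Set (Fin n → ℝ) :=
  {x | x ∈ polyCone w ∧ x ⬝ᵥ w i = 0}

structure IsIrredundantCone (w : ι → Fin n → ℝ) : Prop where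
  interior_nonempty : (interior (polyCone w)).Nonempty
  finrank_span_polyFacet : ∀ i, finrank ℝ (span ℝ (polyFacet w i)) + 1 = n
  polyFacet_injective : Function.Injective (polyFacet w)

theorem polyCone_comp_equiv {κ : Type*} (w : ι → Fin n → ℝ) (σ : κ ≃ ι) :
    polyCone (w ∘ σ) = polyCone w := by
  ext x
  simp only [polyCone, mem_ofPred_eq, Function.comp_apply, ← σ.forall_congr_right]

theorem image_polyCone_eq {v w : ι → Fin n → ℝ} (A : (Fin n → ℝ) ≃ₗ[ℝ] (Fin n → ℝ))
    {c : ι → ℝ} (hc : ∀ i, 0 < c i) (hA : ∀ x i, c i * (A x ⬝ᵥ w i) = x ⬝ᵥ v i) :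
    A '' polyCone v = polyCone w := by
  ext y
  obtain ⟨x, rfl⟩ := A.surjective y
  simp only [A.injective.mem_set_image, polyCone, mem_ofPred_eq, ← hA,
    mul_nonneg_iff_of_pos_left (hc _)]

theorem exists_linearEquiv_dotProduct_eq {u v : Fin n → Fin n → ℝ}
    (hu : ∀ y, (∀ i, y ⬝ᵥ u i = 0) → y = 0) (hv : ∀ y, (∀ i, y ⬝ᵥ v i = 0) → y = 0) :
    ∃ A : (Fin n → ℝ) ≃ₗ[ℝ] (Fin n → ℝ), ∀ x i, A x ⬝ᵥ u i = x ⬝ᵥ v i := by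
  have hinj : ∀ u : Fin n → Fin n → ℝ, (∀ y, (∀ i, y ⬝ᵥ u i = 0) → y = 0) →
      Function.Injective (mulVecLin (of u)) := fun u hu =>
    (injective_iff_map_eq_zero _).2 fun y hy =>
      hu y fun i => by rw [dotProduct_comm]; exact congrFun hy i
  let Φu := LinearEquiv.ofInjectiveEndo _ (hinj u hu)
  let Φv := LinearEquiv.ofInjectiveEndo _ (hinj v hv)
  refine ⟨Φv.trans Φu.symm, fun x i => ?_⟩
  rw [dotProduct_comm, dotProduct_comm x]
  exact congrFun (Φu.apply_symm_apply (Φv x)) i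

namespace IsIrredundantCone

variable {w : ι → Fin n → ℝ}

theorem span_polyCone_eq_top (hw : IsIrredundantCone w) : span ℝ (polyCone w) = ⊤ :=
  eq_top_of_nonempty_interior' _ (hw.interior_nonempty.mono (interior_mono subset_span))

theorem ne_zero (hw : IsIrredundantCone w) (i : ι) : w i ≠ 0 := by
  intro hi
  have hF : polyFacet w i = polyCone w := by ext x; simp [polyFacet, hi]
  have := hw.finrank_span_polyFacet i
  rw [hF, hw.span_polyCone_eq_top, finrank_top, finrank_fin_fun] at this
  omega

theorem span_polyFacet_eq_ker (hw : IsIrredundantCone w) (i : ι) :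
    span ℝ (polyFacet w i) = LinearMap.ker (dotProductEquiv ℝ (Fin n) (w i)) := by
  refine eq_of_le_of_finrank_eq (span_le.2 fun x hx => ?_) ?_
  · simpa [dotProduct_comm] using hx.2
  · have hker := Dual.finrank_ker_add_one_of_ne_zero
      ((dotProductEquiv ℝ (Fin n)).map_ne_zero_iff.2 (hw.ne_zero i))
    have := hw.finrank_span_polyFacet i
    rw [finrank_fin_fun] at hker
    omega

theorem eq_of_polyFacet_subset (hw : IsIrredundantCone w) {i k : ι}
    (h : polyFacet w k ⊆ polyFacet w i) : k = i := by
  have hker : LinearMap.ker (dotProductEquiv ℝ (Fin n) (w k)) =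
      LinearMap.ker (dotProductEquiv ℝ (Fin n) (w i)) := by
    rw [← hw.span_polyFacet_eq_ker, ← hw.span_polyFacet_eq_ker]
    refine eq_of_le_of_finrank_eq (span_mono h) ?_
    have := hw.finrank_span_polyFacet i
    have := hw.finrank_span_polyFacet k
    omega
  refine hw.polyFacet_injective (Set.ext fun x => and_congr_right fun _ => ?_)
  simpa [dotProduct_comm] using SetLike.ext_iff.1 hker x

theorem exists_ne_pos [Fintype ι] (hw : IsIrredundantCone w) {g : ι → ℝ}
    (hrel : ∑ i, g i • w i = 0) (hg : g ≠ 0) (k : ι) : ∃ i ≠ k, 0 < g i := by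
  by_contra! hnonpos
  obtain ⟨i, hik, hi⟩ : ∃ i ≠ k, g i ≠ 0 := by
    by_contra! hzero
    rw [Fintype.sum_eq_single k fun j hj => by simp [hzero j hj]] at hrel
    refine hg (funext fun j => ?_)
    rcases eq_or_ne j k with rfl | hj
    · exact (smul_eq_zero.1 hrel).resolve_right (hw.ne_zero j)
    · exact hzero j hj
  refine hik.symm (hw.eq_of_polyFacet_subset fun x ⟨hxC, hxk⟩ => ⟨hxC, ?_⟩)
  -- on the facet of `k`, the relation is a vanishing sum of nonpositive terms
  have hterm : ∀ j, g j * (x ⬝ᵥ w j) ≤ 0 := fun j => by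
    rcases eq_or_ne j k with rfl | hj
    · rw [hxk, mul_zero]
    · exact mul_nonpos_of_nonpos_of_nonneg (hnonpos j hj) (hxC j)
  have hsum : ∑ j, g j * (x ⬝ᵥ w j) = 0 := by
    simpa [dotProduct_sum, dotProduct_smul] using congrArg (x ⬝ᵥ ·) hrel
  have := (Finset.sum_eq_zero_iff_of_nonpos fun j _ => hterm j).1 hsum i (Finset.mem_univ i)
  exact (mul_eq_zero.1 this).resolve_left hi

theorem exists_ne_neg [Fintype ι] (hw : IsIrredundantCone w) {g : ι → ℝ}
    (hrel : ∑ i, g i • w i = 0) (hg : g ≠ 0) (k : ι) : ∃ i ≠ k, g i < 0 := by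
  have hrel' : ∑ i, (-g) i • w i = 0 := by simp [neg_smul, hrel]
  simpa using hw.exists_ne_pos hrel' (neg_ne_zero.2 hg) k

end IsIrredundantCone

theorem exists_perm_alternating_signs {g : Fin 4 → ℝ} (hpos : ∀ k, ∃ i ≠ k, 0 < g i)
    (hneg : ∀ k, ∃ i ≠ k, g i < 0) :
    ∃ σ : Equiv.Perm (Fin 4), 0 < g (σ 0) ∧ g (σ 1) < 0 ∧ 0 < g (σ 2) ∧ g (σ 3) < 0 := by
  obtain ⟨p, -, hp⟩ := hpos 0
  obtain ⟨r, hrp, hr⟩ := hpos p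
  obtain ⟨q, -, hq⟩ := hneg 0
  obtain ⟨t, htq, ht⟩ := hneg q
  have hinj : Function.Injective ![p, q, r, t] := by
    have : p ≠ q ∧ p ≠ t ∧ r ≠ q ∧ r ≠ t := by
      refine ⟨?_, ?_, ?_, ?_⟩ <;> rintro rfl <;> linarith
    simp only [Matrix.vecCons, Fin.cons_injective_iff]
    simp_all [eq_comm, Function.injective_of_subsingleton]
  exact ⟨Equiv.ofBijective _ (Finite.injective_iff_bijective.1 hinj), hp, hq, hr, ht⟩

theorem IsIrredundantCone.eq_zero_of_forall_dotProduct_eq_zero {w : Fin 4 → Fin 3 → ℝ}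
    (hw : IsIrredundantCone w) {y : Fin 3 → ℝ} (hy : ∀ i, y ⬝ᵥ w i = 0) : y = 0 := by
  by_contra hy0
  have hdep : ¬ LinearIndependent ℝ ![w 0, w 1, w 2] := fun hli => by
    have hle : span ℝ (range ![w 0, w 1, w 2]) ≤ LinearMap.ker (dotProductEquiv ℝ (Fin 3) y) :=
      span_le.2 (by rintro _ ⟨i, rfl⟩; fin_cases i <;> simp [hy])
    have hker := Dual.finrank_ker_add_one_of_ne_zero
      ((dotProductEquiv ℝ (Fin 3)).map_ne_zero_iff.2 hy0)
    have := finrank_mono hle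
    rw [finrank_span_eq_card hli] at this
    simp only [Fintype.card_fin, finrank_fin_fun] at this hker
    omega
  obtain ⟨h, hrel, j, hj⟩ := Fintype.not_linearIndependent_iff.1 hdep
  -- a relation with a vanishing coefficient leaves only three indices for the two positive
  -- and two negative coefficients
  let g : Fin 4 → ℝ := ![h 0, h 1, h 2, 0]
  have hgrel : ∑ i, g i • w i = 0 := by
    simpa [g, Fin.sum_univ_four, Fin.sum_univ_three] using hrel
  have hg : g ≠ 0 := Function.ne_iff.2 ⟨j.castSucc, by fin_cases j <;> simpa [g] using hj⟩
  obtain ⟨σ, h0, h1, h2, h3⟩ :=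
    exists_perm_alternating_signs (hw.exists_ne_pos hgrel hg) (hw.exists_ne_neg hgrel hg)
  have hσ : ∀ i, g (σ i) ≠ 0 := by
    intro i
    fin_cases i
    exacts [h0.ne', h1.ne, h2.ne', h3.ne]
  exact hσ (σ.symm 3) (by simp [g])

theorem vCone_zero_add_vCone_two : vCone 0 + vCone 2 = vCone 1 + vCone 3 := by
  ext i; fin_cases i <;> simp [vCone]

theorem exists_linearEquiv_image_Co {w : Fin 4 → Fin 3 → ℝ}
    (hlin : ∀ y, (∀ i, y ⬝ᵥ w i = 0) → y = 0) {a b c d : ℝ}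
    (ha : 0 < a) (hb : 0 < b) (hc : 0 < c) (hd : 0 < d)
    (hrel : a • w 0 + c • w 2 = b • w 1 + d • w 3) :
    ∃ A : (Fin 3 → ℝ) ≃ₗ[ℝ] (Fin 3 → ℝ), A '' Co = polyCone w := by
  have hw3 : ∀ y, y ⬝ᵥ (d • w 3) = y ⬝ᵥ (a • w 0) + y ⬝ᵥ (c • w 2) - y ⬝ᵥ (b • w 1) := by
    intro y
    rw [eq_sub_iff_add_eq, ← dotProduct_add, ← dotProduct_add, hrel, add_comm]
  have hu : ∀ y, (∀ i, y ⬝ᵥ ![a • w 0, b • w 1, c • w 2] i = 0) → y = 0 := by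
    intro y hy
    have h0 : y ⬝ᵥ w 0 = 0 := by simpa [ha.ne'] using hy 0
    have h1 : y ⬝ᵥ w 1 = 0 := by simpa [hb.ne'] using hy 1
    have h2 : y ⬝ᵥ w 2 = 0 := by simpa [hc.ne'] using hy 2
    have h3 : y ⬝ᵥ w 3 = 0 := by simpa [h0, h1, h2, hd.ne'] using hw3 y
    refine hlin y fun i => ?_
    fin_cases i <;> assumption
  have hv : ∀ y, (∀ i, y ⬝ᵥ ![vCone 0, vCone 1, vCone 2] i = 0) → y = 0 := by
    intro y hy
    have h0 := hy 0
    have h1 := hy 1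
    have h2 := hy 2
    simp only [dotProduct, vCone, Fin.isValue, cons_val_zero, cons_val_one, cons_val,
      cons_val', cons_val_fin_one, Fin.sum_univ_three, mul_one, mul_zero, add_zero, zero_add,
      mul_neg] at h0 h1 h2
    ext i
    fin_cases i <;> simp only [Fin.zero_eta, Fin.mk_one, Fin.reduceFinMk, Pi.zero_apply] <;>
      linarith
  obtain ⟨A, hA⟩ := exists_linearEquiv_dotProduct_eq hu hv
  -- `Co` is `polyCone vCone` by unfolding, since `dot3` is `dotProduct`
  refine ⟨A, image_polyCone_eq (v := vCone) A (c := ![a, b, c, d]) ?_ fun x i => ?_⟩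
  · intro i; fin_cases i <;> assumption
  · have h0 : a * (A x ⬝ᵥ w 0) = x ⬝ᵥ vCone 0 := by simpa using hA x 0
    have h1 : b * (A x ⬝ᵥ w 1) = x ⬝ᵥ vCone 1 := by simpa using hA x 1
    have h2 : c * (A x ⬝ᵥ w 2) = x ⬝ᵥ vCone 2 := by simpa using hA x 2
    have h3 : d * (A x ⬝ᵥ w 3) = x ⬝ᵥ vCone 3 := by
      have hv := congrArg (x ⬝ᵥ ·) vCone_zero_add_vCone_two
      simp only [dotProduct_add] at hv
      simp only [dotProduct_smul, smul_eq_mul] at hw3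
      rw [hw3]
      linarith
    fin_cases i <;> assumption

theorem stmt19_general (w : Fin 4 → Fin 3 → ℝ) (C : Set (Fin 3 → ℝ))
    (hC : C = {x | ∀ i, 0 ≤ dot3 x (w i)})
    (hint : (interior C).Nonempty)
    (hdim : ∀ i,
      Module.finrank ℝ (Submodule.span ℝ {x | x ∈ C ∧ dot3 x (w i) = 0}) = 2)
    (hdistinct : ∀ i j, i ≠ j →
      {x | x ∈ C ∧ dot3 x (w i) = 0} ≠ {x | x ∈ C ∧ dot3 x (w j) = 0}) :
    ∃ A : (Fin 3 → ℝ) ≃ₗ[ℝ] (Fin 3 → ℝ), ⇑A '' Co = C := by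
  subst hC
  have hw : IsIrredundantCone w := ⟨hint, fun i => congrArg (· + 1) (hdim i),
    fun i j h => by_contra fun hij => hdistinct i j hij h⟩
  obtain ⟨g, hrel, i, hi⟩ := Fintype.not_linearIndependent_iff.1
    fun hli : LinearIndependent ℝ w => by simpa using hli.fintype_card_le_finrank
  have hg : g ≠ 0 := Function.ne_iff.2 ⟨i, hi⟩
  obtain ⟨σ, h0, h1, h2, h3⟩ :=
    exists_perm_alternating_signs (hw.exists_ne_pos hrel hg) (hw.exists_ne_neg hrel hg)
  rw [← Equiv.sum_comp σ, Fin.sum_univ_four] at hrel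
  obtain ⟨A, hA⟩ := exists_linearEquiv_image_Co (w := w ∘ σ)
    (fun y hy => hw.eq_zero_of_forall_dotProduct_eq_zero fun j => by simpa using hy (σ.symm j))
    h0 (neg_pos.2 h1) h2 (neg_pos.2 h3)
    (by simp only [Function.comp_apply]; linear_combination (norm := module) hrel)
  exact ⟨A, hA.trans (polyCone_comp_equiv w σ)⟩

/-- Every strictly convex polyhedral cone in `ℝ³` with exactly `4` facets
is linearly equivalent to `C_o`: if `C = ∩_{i=1}^4 {x : ⟨x,w_i⟩ ≥ 0}` is a closed convex
cone with nonempty interior satisfying `C ∩ (−C) = {0}`, such that each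
`F_i = C ∩ {⟨·,w_i⟩ = 0}` is `2`-dimensional and the four `F_i` are pairwise distinct, then
there is a linear isomorphism `A` of `ℝ³` with `A(C_o) = C`. -/
theorem stmt19 (w : Fin 4 → Fin 3 → ℝ) (C : Set (Fin 3 → ℝ))
    (hC : C = {x | ∀ i, 0 ≤ dot3 x (w i)})
    (hint : (interior C).Nonempty)
    (hstrict : {x | x ∈ C ∧ -x ∈ C} = {(0 : Fin 3 → ℝ)})
    (hdim : ∀ i,
      Module.finrank ℝ (Submodule.span ℝ {x | x ∈ C ∧ dot3 x (w i) = 0}) = 2)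
    (hdistinct : ∀ i j, i ≠ j →
      {x | x ∈ C ∧ dot3 x (w i) = 0} ≠ {x | x ∈ C ∧ dot3 x (w j) = 0}) :
    ∃ A : (Fin 3 → ℝ) ≃ₗ[ℝ] (Fin 3 → ℝ), ⇑A '' Co = C :=
  stmt19_general w C hC hint hdim hdistinct
end
end
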